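/- Let Y, Z be real random variables on a probability space with a sub-σ-algebra 𝒢, let f : ℝ² → ℝ, h > 0, and ΔW a centered Gaussian with variance h independent of 𝒢 and of (Y_next), where Y_next is a given square-integrable random variable. Consider the minimization over 𝒢-measurable square-integrable (y, z) of E[|Y_next − (y − h·f(y, z) + z·ΔW)|²]. If f does not depend on (y,z) (f ≡ F a 𝒢-measurable random variable), then the unique minimizer is y* = E[Y_next | 𝒢] + h·F and z* = (1/h)·E[Y_next·ΔW | 𝒢]. -/

import Mathlib

/-!
Write `u = y - h F` and `P = E[Y_next | 𝒢]`. Because `ΔW` is centred with `E[ΔW²] = h` and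
independent of `𝒢 ⊔ σ(Y_next)`, the cross term of `(Y_next - u - z ΔW)²` has mean zero and the
objective is `E[(Y_next - u)²] + h E[z²]`, which by Pythagoras for the conditional expectation is
`E[(Y_next - P)²] + E[(P - u)²] + h E[z²]`. The same independence gives `E[Y_next ΔW | 𝒢] = 0`,
so `z* = 0` and the objective at `(y*, z*)` is the first term alone: it is the minimum, attained
only where `u = P` and `z = 0` almost everywhere.
-/

open MeasureTheory ProbabilityTheory

section

variable {Ω : Type*} {m m' mΩ : MeasurableSpace Ω} {μ : Measure Ω} {W : Ω → ℝ}

lemma ae_eq_zero_of_integral_sq_eq_zero {f : Ω → ℝ} (hf : MemLp f 2 μ)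
    (h : ∫ ω, f ω ^ 2 ∂μ = 0) : f =ᵐ[μ] 0 := by
  filter_upwards [(integral_eq_zero_iff_of_nonneg (fun ω => sq_nonneg (f ω))
    hf.integrable_sq).mp h] with ω hω
  exact pow_eq_zero_iff two_ne_zero |>.mp hω

lemma integral_mul_sub_condExp_eq_zero [IsFiniteMeasure μ] (hm : m ≤ mΩ) {Y D : Ω → ℝ}
    (hY : MemLp Y 2 μ) (hD : StronglyMeasurable[m] D) (hD2 : MemLp D 2 μ) :
    ∫ ω, D ω * (Y ω - μ[Y|m] ω) ∂μ = 0 := by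
  have hDY : Integrable (fun ω => D ω * Y ω) μ := hD2.integrable_mul hY
  have hDP : Integrable (fun ω => D ω * μ[Y|m] ω) μ :=
    hD2.integrable_mul (hY.condExp one_le_two)
  have hpull : ∫ ω, D ω * Y ω ∂μ = ∫ ω, D ω * μ[Y|m] ω ∂μ :=
    (integral_condExp hm).symm.trans <| integral_congr_ae <|
      condExp_mul_of_stronglyMeasurable_left hD hDY (hY.integrable one_le_two)
  simp_rw [mul_sub]
  rw [integral_sub hDY hDP, hpull, sub_self]

lemma integral_sq_sub_eq_integral_sq_sub_condExp_add [IsFiniteMeasure μ] (hm : m ≤ mΩ)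
    {Y u : Ω → ℝ} (hY : MemLp Y 2 μ) (hu : StronglyMeasurable[m] u) (hu2 : MemLp u 2 μ) :
    ∫ ω, (Y ω - u ω) ^ 2 ∂μ =
      ∫ ω, (Y ω - μ[Y|m] ω) ^ 2 ∂μ + ∫ ω, (μ[Y|m] ω - u ω) ^ 2 ∂μ := by
  have hP2 : MemLp (μ[Y|m]) 2 μ := hY.condExp one_le_two
  have horth : ∫ ω, (μ[Y|m] ω - u ω) * (Y ω - μ[Y|m] ω) ∂μ = 0 :=
    integral_mul_sub_condExp_eq_zero hm hY (stronglyMeasurable_condExp.sub hu) (hP2.sub hu2)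
  have hE : Integrable (fun ω => (Y ω - μ[Y|m] ω) ^ 2) μ := (hY.sub hP2).integrable_sq
  have hD : Integrable (fun ω => (μ[Y|m] ω - u ω) ^ 2) μ := (hP2.sub hu2).integrable_sq
  have hED : Integrable (fun ω => (μ[Y|m] ω - u ω) * (Y ω - μ[Y|m] ω)) μ :=
    (hP2.sub hu2).integrable_mul (hY.sub hP2)
  calc ∫ ω, (Y ω - u ω) ^ 2 ∂μ
      = ∫ ω, ((Y ω - μ[Y|m] ω) ^ 2 + (μ[Y|m] ω - u ω) ^ 2
          + 2 * ((μ[Y|m] ω - u ω) * (Y ω - μ[Y|m] ω))) ∂μ := by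
        congr 1; ext ω; ring
    _ = _ := by
        rw [integral_add (hE.fun_add hD) (hED.const_mul 2), integral_add hE hD,
          integral_const_mul, horth, mul_zero, add_zero]

lemma indepFun_of_indep_of_measurable
    (hindep : Indep (MeasurableSpace.comap W Real.measurableSpace) m μ) {X : Ω → ℝ}
    (hX : Measurable[m] X) : IndepFun W X μ :=
  indep_of_indep_of_le_right hindep hX.comap_le

lemma integral_sq_sub_mul_of_indep [IsProbabilityMeasure μ]
    (hindep : Indep (MeasurableSpace.comap W Real.measurableSpace) m μ) (hW2 : MemLp W 2 μ)
    (hW0 : ∫ ω, W ω ∂μ = 0) {X Z : Ω → ℝ} (hX : Measurable[m] X) (hZ : Measurable[m] Z)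
    (hX2 : MemLp X 2 μ) (hZ2 : MemLp Z 2 μ) :
    ∫ ω, (X ω - Z ω * W ω) ^ 2 ∂μ =
      ∫ ω, X ω ^ 2 ∂μ + (∫ ω, Z ω ^ 2 ∂μ) * ∫ ω, W ω ^ 2 ∂μ := by
  have hXZW : IndepFun W (fun ω => X ω * Z ω) μ :=
    indepFun_of_indep_of_measurable hindep (hX.mul hZ)
  have hZW2 : IndepFun (fun ω => Z ω ^ 2) (fun ω => W ω ^ 2) μ :=
    (indepFun_of_indep_of_measurable hindep hZ).symm.comp (measurable_id.pow_const 2)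
      (measurable_id.pow_const 2)
  have hXZ : Integrable (fun ω => X ω * Z ω) μ := hX2.integrable_mul hZ2
  have hcross : ∫ ω, X ω * Z ω * W ω ∂μ = 0 := by
    rw [hXZW.symm.integral_fun_mul_eq_mul_integral hXZ.1 hW2.1, hW0, mul_zero]
  have hsq : ∫ ω, Z ω ^ 2 * W ω ^ 2 ∂μ = (∫ ω, Z ω ^ 2 ∂μ) * ∫ ω, W ω ^ 2 ∂μ :=
    hZW2.integral_fun_mul_eq_mul_integral hZ2.integrable_sq.1 hW2.integrable_sq.1
  have hXZW_int : Integrable (fun ω => X ω * Z ω * W ω) μ :=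
    hXZW.symm.integrable_mul hXZ (hW2.integrable one_le_two)
  have hZW_int : Integrable (fun ω => Z ω ^ 2 * W ω ^ 2) μ :=
    hZW2.integrable_mul hZ2.integrable_sq hW2.integrable_sq
  calc ∫ ω, (X ω - Z ω * W ω) ^ 2 ∂μ
      = ∫ ω, (X ω ^ 2 + Z ω ^ 2 * W ω ^ 2 - 2 * (X ω * Z ω * W ω)) ∂μ := by
        congr 1; ext ω; ring
    _ = _ := by
        rw [integral_sub (hX2.integrable_sq.fun_add hZW_int) (hXZW_int.const_mul 2),
          integral_add hX2.integrable_sq hZW_int, integral_const_mul, hcross, hsq, mul_zero,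
          sub_zero]

lemma integral_sq_sub_add_mul_of_indep [IsProbabilityMeasure μ] (hm : m ≤ m') (hm' : m' ≤ mΩ)
    (hindep : Indep (MeasurableSpace.comap W Real.measurableSpace) m' μ) (hW2 : MemLp W 2 μ)
    (hW0 : ∫ ω, W ω ∂μ = 0) {Y u Z : Ω → ℝ} (hY : Measurable[m'] Y) (hY2 : MemLp Y 2 μ)
    (hu : Measurable[m] u) (hu2 : MemLp u 2 μ) (hZ : Measurable[m] Z) (hZ2 : MemLp Z 2 μ) :
    ∫ ω, (Y ω - (u ω + Z ω * W ω)) ^ 2 ∂μ =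
      ∫ ω, (Y ω - μ[Y|m] ω) ^ 2 ∂μ + ∫ ω, (μ[Y|m] ω - u ω) ^ 2 ∂μ
        + (∫ ω, Z ω ^ 2 ∂μ) * ∫ ω, W ω ^ 2 ∂μ := by
  simp_rw [← sub_sub]
  rw [integral_sq_sub_mul_of_indep (X := fun ω => Y ω - u ω) hindep hW2 hW0
      (hY.sub (hu.mono hm le_rfl)) (hZ.mono hm le_rfl) (hY2.sub hu2) hZ2,
    integral_sq_sub_eq_integral_sq_sub_condExp_add (hm.trans hm') hY2 hu.stronglyMeasurable hu2]

lemma condExp_mul_ae_eq_zero_of_indep [IsProbabilityMeasure μ] (hm : m ≤ m') (hm' : m' ≤ mΩ)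
    (hindep : Indep (MeasurableSpace.comap W Real.measurableSpace) m' μ) (hW : Measurable W)
    (hWint : Integrable W μ) (hW0 : ∫ ω, W ω ∂μ = 0) {Y : Ω → ℝ} (hY : Measurable[m'] Y)
    (hYint : Integrable Y μ) :
    μ[fun ω => Y ω * W ω|m] =ᵐ[μ] 0 := by
  change μ[Y * W|m] =ᵐ[μ] 0
  have hYW : Integrable (Y * W) μ :=
    (indepFun_of_indep_of_measurable hindep hY).symm.integrable_mul hYint hWint
  have hW_cond : μ[W|m'] =ᵐ[μ] fun _ => ∫ ω, W ω ∂μ :=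
    condExp_indep_eq hW.comap_le hm' (measurable_iff_comap_le.mpr le_rfl).stronglyMeasurable
      hindep
  have hYW_cond : μ[Y * W|m'] =ᵐ[μ] 0 := by
    filter_upwards [condExp_mul_of_stronglyMeasurable_left hY.stronglyMeasurable hYW hWint,
      hW_cond] with ω hω hωW
    simp [hω, hωW, hW0]
  calc μ[Y * W|m]
      =ᵐ[μ] μ[μ[Y * W|m']|m] := (condExp_condExp_of_le hm hm').symm
    _ =ᵐ[μ] μ[(0 : Ω → ℝ)|m] := condExp_congr_ae hYW_cond
    _ = 0 := condExp_zero

variable {X : Ω → ℝ} {v : NNReal}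

lemma memLp_two_of_hasLaw_gaussianReal (hX : HasLaw X (gaussianReal 0 v) μ) : MemLp X 2 μ :=
  hX.hasGaussianLaw.memLp_two

lemma integral_eq_zero_of_hasLaw_gaussianReal (hX : HasLaw X (gaussianReal 0 v) μ) :
    ∫ ω, X ω ∂μ = 0 :=
  hX.integral_eq.trans integral_id_gaussianReal

lemma integral_sq_eq_of_hasLaw_gaussianReal (hX : HasLaw X (gaussianReal 0 v) μ) :
    ∫ ω, X ω ^ 2 ∂μ = v := by
  rw [← variance_of_integral_eq_zero hX.aemeasurable
      (integral_eq_zero_of_hasLaw_gaussianReal hX),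
    hX.variance_eq, variance_id_gaussianReal]

end

theorem stmt_12 {Ω : Type*} (𝒢 : MeasurableSpace Ω) [mΩ : MeasurableSpace Ω]
    (μ : Measure Ω) [IsProbabilityMeasure μ] (h𝒢 : 𝒢 ≤ mΩ)
    (h : ℝ) (hh : 0 < h)
    (ΔW Ynext F : Ω → ℝ)
    (hΔW : Measurable ΔW) (hYnext : MemLp Ynext 2 μ)
    (hF : Measurable[𝒢] F) (hFL2 : MemLp F 2 μ)
    (hlaw : μ.map ΔW = gaussianReal 0 ⟨h, le_of_lt hh⟩)
    (hindep : Indep (MeasurableSpace.comap ΔW Real.measurableSpace)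
      (𝒢 ⊔ MeasurableSpace.comap Ynext Real.measurableSpace) μ)
    (hYnextMeas : Measurable Ynext)
    (ystar zstar : Ω → ℝ)
    (hystar : ystar =ᵐ[μ] fun ω => (μ[Ynext | 𝒢]) ω + h * F ω)
    (hzstar : zstar =ᵐ[μ] fun ω => (1 / h) * (μ[fun ω' => Ynext ω' * ΔW ω' | 𝒢]) ω) :
    ∀ y z : Ω → ℝ, Measurable[𝒢] y → Measurable[𝒢] z → MemLp y 2 μ → MemLp z 2 μ →
      (∫ ω, |Ynext ω - (ystar ω - h * F ω + zstar ω * ΔW ω)| ^ 2 ∂μ ≤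
        ∫ ω, |Ynext ω - (y ω - h * F ω + z ω * ΔW ω)| ^ 2 ∂μ) ∧
      ((∫ ω, |Ynext ω - (y ω - h * F ω + z ω * ΔW ω)| ^ 2 ∂μ =
        ∫ ω, |Ynext ω - (ystar ω - h * F ω + zstar ω * ΔW ω)| ^ 2 ∂μ) →
        (y =ᵐ[μ] ystar ∧ z =ᵐ[μ] zstar)) := by
  intro y z hy hz hy2 hz2
  set P := μ[Ynext|𝒢]
  have hlawW : HasLaw ΔW (gaussianReal 0 ⟨h, le_of_lt hh⟩) μ := ⟨hΔW.aemeasurable, hlaw⟩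
  have hW2 := memLp_two_of_hasLaw_gaussianReal hlawW
  have hW0 := integral_eq_zero_of_hasLaw_gaussianReal hlawW
  have hle : 𝒢 ⊔ MeasurableSpace.comap Ynext Real.measurableSpace ≤ mΩ :=
    sup_le h𝒢 hYnextMeas.comap_le
  have hY : Measurable[𝒢 ⊔ MeasurableSpace.comap Ynext Real.measurableSpace] Ynext :=
    Measurable.of_comap_le le_sup_right
  have hzstar0 : zstar =ᵐ[μ] 0 := by
    filter_upwards [hzstar, condExp_mul_ae_eq_zero_of_indep le_sup_left hle hindep hΔW
      (hW2.integrable one_le_two) hW0 hY (hYnext.integrable one_le_two)] with ω hω hω0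
    simp [hω, hω0]
  have hstar : ∫ ω, |Ynext ω - (ystar ω - h * F ω + zstar ω * ΔW ω)| ^ 2 ∂μ =
      ∫ ω, (Ynext ω - P ω) ^ 2 ∂μ := by
    refine integral_congr_ae ?_
    filter_upwards [hystar, hzstar0] with ω hωy hωz
    simp [hωy, hωz]
  have hobj : ∫ ω, |Ynext ω - (y ω - h * F ω + z ω * ΔW ω)| ^ 2 ∂μ =
      ∫ ω, (Ynext ω - P ω) ^ 2 ∂μ + ∫ ω, (P ω - (y ω - h * F ω)) ^ 2 ∂μ
        + (∫ ω, z ω ^ 2 ∂μ) * h := by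
    simp_rw [sq_abs]
    rw [integral_sq_sub_add_mul_of_indep (u := fun ω => y ω - h * F ω) le_sup_left hle hindep
      hW2 hW0 hY hYnext (hy.sub (hF.const_mul h)) (hy2.sub (hFL2.const_mul h)) hz hz2,
      integral_sq_eq_of_hasLaw_gaussianReal hlawW]
    rfl
  have hdev : 0 ≤ ∫ ω, (P ω - (y ω - h * F ω)) ^ 2 ∂μ := integral_nonneg fun ω => sq_nonneg _
  have hz_term : 0 ≤ (∫ ω, z ω ^ 2 ∂μ) * h :=
    mul_nonneg (integral_nonneg fun ω => sq_nonneg _) hh.le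
  refine ⟨by rw [hstar, hobj]; linarith, fun heq => ?_⟩
  rw [hstar, hobj] at heq
  have hdev0 : ∫ ω, (P ω - (y ω - h * F ω)) ^ 2 ∂μ = 0 := by linarith
  have hz_sq0 : ∫ ω, z ω ^ 2 ∂μ = 0 := (mul_eq_zero.mp (by linarith)).resolve_right hh.ne'
  refine ⟨?_, (ae_eq_zero_of_integral_sq_eq_zero hz2 hz_sq0).trans hzstar0.symm⟩
  filter_upwards [ae_eq_zero_of_integral_sq_eq_zero
    ((hYnext.condExp one_le_two).sub (hy2.sub (hFL2.const_mul h))) hdev0, hystar] with ω hω hωy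
  simp only [Pi.zero_apply, Pi.sub_apply] at hω
  rw [hωy]
  linarith
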